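/- arXiv:2106.06367 — 4 statements merged into one kernel-verified Lean document; each statement's English description precedes it below -/
import Mathlib

section
/- There exists a constant C > 0, depending only on c₂, such that for every t ≥ 1 and every continuously differentiable function f : ℝ → ℂ with f ∈ L²(ℝ) and 𝓛_t f ∈ L²(ℝ), one has sup_{x∈ℝ} |f(x)| ≤ C t^{−1/2} ‖f‖_{L²(ℝ)}^{1/2} ‖𝓛_t f‖_{L²(ℝ)}^{1/2}. -/
/-!
Since `Im (conj f · 𝓛_t f) = -2 c₂ t Re (conj f · f')`, the derivative `2 Re (conj f · f')` of
`|f|²` is bounded pointwise by `|f| |𝓛_t f| / (c₂ t)`. Being integrable, `|f|²` vanishes at `-∞`,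
so `|f(x)|²` is at most the integral of that bound, which Cauchy–Schwarz controls by
`‖f‖₂ ‖𝓛_t f‖₂ / (c₂ t)`.
-/

open MeasureTheory Real Set

noncomputable section

/-- For `t > 0`, the vector field `𝓛_t` acting on functions of `x` by
`(𝓛_t f)(x) = (x + c₁ t) f(x) − 2 i c₂ t f′(x)`. -/
def vecL (c₂ c₁ t : ℝ) (f : ℝ → ℂ) : ℝ → ℂ :=
  fun x => ((x : ℂ) + (c₁ : ℂ) * (t : ℂ)) * f x - 2 * Complex.I * (c₂ : ℂ) * (t : ℂ) * deriv f x

open Filter Topology ComplexConjugate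
open scoped RealInnerProductSpace

theorem norm_le_integral_norm_deriv_of_integrable {E : Type*} [NormedAddCommGroup E]
    [NormedSpace ℝ E] [CompleteSpace E] {g g' : ℝ → E} (hg : ∀ y, HasDerivAt g (g' y) y)
    (hg_int : Integrable g) (hg'_int : Integrable g') (x : ℝ) :
    ‖g x‖ ≤ ∫ y, ‖g' y‖ := by
  have hlim : Tendsto g atBot (𝓝 0) :=
    tendsto_zero_of_hasDerivAt_of_integrableOn_Iic (a := x) (fun y _ ↦ hg y)
      hg'_int.integrableOn hg_int.integrableOn
  have hftc : ∫ y in Iic x, g' y = g x := by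
    rw [integral_Iic_of_hasDerivAt_of_tendsto' (fun y _ ↦ hg y) hg'_int.integrableOn hlim,
      sub_zero]
  calc ‖g x‖ = ‖∫ y in Iic x, g' y‖ := by rw [hftc]
    _ ≤ ∫ y in Iic x, ‖g' y‖ := norm_integral_le_integral_norm _
    _ ≤ ∫ y, ‖g' y‖ :=
      setIntegral_le_integral hg'_int.norm (Eventually.of_forall fun _ ↦ norm_nonneg _)

theorem sq_norm_le_two_mul_integral_abs_inner_deriv {F : Type*} [NormedAddCommGroup F]
    [InnerProductSpace ℝ F] {f f' : ℝ → F} (hf : ∀ y, HasDerivAt f (f' y) y)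
    (hf_two : MemLp f 2) (hint : Integrable fun y ↦ ⟪f y, f' y⟫) (x : ℝ) :
    ‖f x‖ ^ 2 ≤ 2 * ∫ y, |⟪f y, f' y⟫| := by
  have := norm_le_integral_norm_deriv_of_integrable (fun y ↦ (hf y).norm_sq)
    ((memLp_two_iff_integrable_sq_norm hf_two.1).1 hf_two) (hint.const_mul 2) x
  simpa [abs_mul, integral_const_mul] using this

theorem integral_norm_mul_norm_le_eLpNorm_mul_eLpNorm {α E : Type*} [MeasurableSpace α]
    {μ : Measure α} [NormedAddCommGroup E] {f g : α → E} {p q : ℝ} (hpq : p.HolderConjugate q)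
    (hf : MemLp f (ENNReal.ofReal p) μ) (hg : MemLp g (ENNReal.ofReal q) μ) :
    ∫ a, ‖f a‖ * ‖g a‖ ∂μ ≤
      (eLpNorm f (ENNReal.ofReal p) μ).toReal * (eLpNorm g (ENNReal.ofReal q) μ).toReal := by
  rw [hf.eLpNorm_eq_integral_rpow_norm (by simpa using hpq.pos) ENNReal.ofReal_ne_top,
    hg.eLpNorm_eq_integral_rpow_norm (by simpa using hpq.symm.pos) ENNReal.ofReal_ne_top,
    ENNReal.toReal_ofReal hpq.nonneg, ENNReal.toReal_ofReal hpq.symm.nonneg,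
    ENNReal.toReal_ofReal (by positivity), ENNReal.toReal_ofReal (by positivity)]
  simpa only [one_div] using integral_mul_norm_le_Lp_mul_Lq hpq hf hg

theorem im_conj_mul_vecL (c₂ c₁ t : ℝ) (f : ℝ → ℂ) (x : ℝ) :
    (conj (f x) * vecL c₂ c₁ t f x).im = -(2 * (c₂ * t) * ⟪f x, deriv f x⟫) := by
  simp only [vecL, Complex.inner, Complex.mul_im, Complex.mul_re, Complex.sub_im, Complex.sub_re,
    Complex.add_im, Complex.add_re, Complex.conj_re, Complex.conj_im, Complex.ofReal_re,
    Complex.ofReal_im, Complex.I_re, Complex.I_im, Complex.re_ofNat, Complex.im_ofNat]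
  ring

theorem abs_inner_deriv_le_norm_mul_norm_vecL {c₂ t : ℝ} (hct : 0 < c₂ * t) (c₁ : ℝ)
    (f : ℝ → ℂ) (x : ℝ) :
    |⟪f x, deriv f x⟫| ≤ ‖f x‖ * ‖vecL c₂ c₁ t f x‖ / (2 * (c₂ * t)) := by
  rw [le_div_iff₀' (by positivity), ← abs_of_pos (by positivity : 0 < 2 * (c₂ * t)), ← abs_mul,
    ← abs_neg, ← im_conj_mul_vecL c₂ c₁ t f x]
  calc _ ≤ ‖conj (f x) * vecL c₂ c₁ t f x‖ := Complex.abs_im_le_norm _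
    _ = ‖f x‖ * ‖vecL c₂ c₁ t f x‖ := by simp

theorem sq_norm_le_eLpNorm_mul_eLpNorm_vecL_div {c₂ t : ℝ} (hct : 0 < c₂ * t) (c₁ : ℝ)
    {f : ℝ → ℂ} (hf : Differentiable ℝ f) (hf_two : MemLp f 2)
    (hL_two : MemLp (vecL c₂ c₁ t f) 2) (x : ℝ) :
    ‖f x‖ ^ 2 ≤ (eLpNorm f 2).toReal * (eLpNorm (vecL c₂ c₁ t f) 2).toReal / (c₂ * t) := by
  set L := vecL c₂ c₁ t f
  have hbound := abs_inner_deriv_le_norm_mul_norm_vecL hct c₁ f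
  have hprod : Integrable fun y ↦ ‖f y‖ * ‖L y‖ := hf_two.norm.integrable_mul hL_two.norm
  have hint : Integrable fun y ↦ ⟪f y, deriv f y⟫ :=
    (hprod.div_const (2 * (c₂ * t))).mono'
      (hf.continuous.aestronglyMeasurable.inner (aestronglyMeasurable_deriv f _))
      (Eventually.of_forall hbound)
  calc ‖f x‖ ^ 2 ≤ 2 * ∫ y, |⟪f y, deriv f y⟫| :=
        sq_norm_le_two_mul_integral_abs_inner_deriv (fun y ↦ (hf y).hasDerivAt) hf_two hint x
    _ ≤ 2 * ∫ y, ‖f y‖ * ‖L y‖ / (2 * (c₂ * t)) := by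
        gcongr 2 * ?_
        exact integral_mono hint.abs (hprod.div_const _) hbound
    _ = (∫ y, ‖f y‖ * ‖L y‖) / (c₂ * t) := by
        rw [integral_div]
        field_simp
    _ ≤ _ := by
        gcongr
        simpa using integral_norm_mul_norm_le_eLpNorm_mul_eLpNorm Real.HolderConjugate.two_two
          (by simpa using hf_two) (by simpa using hL_two)

/-- There is a constant `C > 0` depending only on `c₂` such that for every
`t ≥ 1` and every `C¹` function `f : ℝ → ℂ` with `f ∈ L²` and `𝓛_t f ∈ L²`,
`sup_x |f(x)| ≤ C t^{-1/2} ‖f‖_{L²}^{1/2} ‖𝓛_t f‖_{L²}^{1/2}`. -/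
theorem sup_bound_by_L (c₂ : ℝ) (hc₂ : 0 < c₂) :
    ∃ C : ℝ, 0 < C ∧ ∀ c₁ : ℝ, ∀ t : ℝ, 1 ≤ t → ∀ f : ℝ → ℂ,
      ContDiff ℝ 1 f →
      MemLp f 2 volume →
      MemLp (vecL c₂ c₁ t f) 2 volume →
      ∀ x : ℝ, ‖f x‖ ≤ C * t ^ (-(1:ℝ)/2) *
        (eLpNorm f 2 volume).toReal ^ ((1:ℝ)/2) *
        (eLpNorm (vecL c₂ c₁ t f) 2 volume).toReal ^ ((1:ℝ)/2) := by
  refine ⟨(√c₂)⁻¹, by positivity, fun c₁ t ht f hf hf_two hL_two x ↦ ?_⟩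
  have ht₀ : 0 < t := one_pos.trans_le ht
  set A := (eLpNorm f 2 volume).toReal
  set B := (eLpNorm (vecL c₂ c₁ t f) 2 volume).toReal
  have hsq : ‖f x‖ ^ 2 ≤ A * B / (c₂ * t) :=
    sq_norm_le_eLpNorm_mul_eLpNorm_vecL_div (mul_pos hc₂ ht₀) c₁
      (hf.differentiable one_ne_zero) hf_two hL_two x
  calc ‖f x‖ = √(‖f x‖ ^ 2) := (sqrt_sq (norm_nonneg _)).symm
    _ ≤ √(A * B / (c₂ * t)) := sqrt_le_sqrt hsq
    _ = _ := by
        rw [neg_div, rpow_neg ht₀.le, ← sqrt_eq_rpow, ← sqrt_eq_rpow, ← sqrt_eq_rpow,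
          sqrt_div (by positivity), sqrt_mul (by positivity), sqrt_mul hc₂.le]
        field_simp

end
end

section
/- There exists a constant C > 0, depending only on c₂, such that for every t ≥ 1 and every Schwartz function f : ℝ → ℂ, one has ‖𝓛_t f‖_{L⁴(ℝ)} ≤ C ‖f‖_{L^∞(ℝ)}^{1/2} ‖𝓛_t² f‖_{L²(ℝ)}^{1/2}, where 𝓛_t² f = 𝓛_t(𝓛_t f). -/
/-! Write `g = 𝓛_t f` and `h = 𝓛_t g`. Since `c₁`, `c₂`, `t` are real, `𝓛_t` is symmetric for the
pairing `∫ u · conj v` (the defect is the derivative of `f · conj u`, which vanishes at infinity),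
and the product rule gives `𝓛_t (g² ḡ) = 2 |g|² h − g² h̄`. Hence
`∫ |g|⁴ = ∫ 𝓛_t f · conj (g² ḡ) = ∫ f · conj (𝓛_t (g² ḡ)) ≤ 3 ‖f‖_∞ ∫ |h| |g|²`,
and Cauchy–Schwarz bounds the last integral by `‖h‖₂ ‖g‖₄²`. So `‖g‖₄² ≤ 3 ‖f‖_∞ ‖h‖₂`,
i.e. `C = √3` works. -/

open MeasureTheory Real Set

noncomputable section

open Filter Topology ComplexConjugate SchwartzMap

section Lp

variable {α E F : Type*} [MeasurableSpace α] {μ : Measure α}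
  [NormedAddCommGroup E] [NormedAddCommGroup F]

theorem integral_norm_pow_eq_lpNorm_pow {f : α → E} (hf : AEStronglyMeasurable f μ) {n : ℕ}
    (hn : n ≠ 0) : ∫ x, ‖f x‖ ^ n ∂μ = lpNorm f n μ ^ n := by
  have hint : 0 ≤ ∫ x, ‖f x‖ ^ (n : ℝ) ∂μ := integral_nonneg fun x => by positivity
  rw [lpNorm_eq_integral_norm_rpow_toReal (by simpa) (by simp) hf, ENNReal.toReal_natCast,
    ← Real.rpow_natCast _ n, ← Real.rpow_mul hint, inv_mul_cancel₀ (by exact_mod_cast hn),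
    Real.rpow_one]
  simp only [Real.rpow_natCast]

theorem integral_norm_mul_norm_sq_le {g : α → E} {h : α → F} (hg : MemLp g 4 μ)
    (hh : MemLp h 2 μ) :
    ∫ x, ‖h x‖ * ‖g x‖ ^ 2 ∂μ ≤ lpNorm h 2 μ * lpNorm g 4 μ ^ 2 := by
  have hg2 : MemLp (fun x => ‖g x‖ ^ 2) (ENNReal.ofReal 2) μ := by
    have := hg.norm_rpow_div 2
    simp only [ENNReal.toReal_ofNat, Real.rpow_ofNat] at this
    rwa [show (4 : ENNReal) / 2 = ENNReal.ofReal 2 by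
      rw [eq_comm, ENNReal.eq_div_iff (by norm_num) (by norm_num)]; norm_num] at this
  have holder := integral_mul_le_Lp_mul_Lq_of_nonneg Real.HolderConjugate.two_two
    (ae_of_all μ fun x => norm_nonneg (h x)) (ae_of_all μ fun x => sq_nonneg ‖g x‖)
    (by simpa using hh.norm) hg2
  have h2 := integral_norm_pow_eq_lpNorm_pow hh.1 two_ne_zero
  have h4 := integral_norm_pow_eq_lpNorm_pow hg.1 four_ne_zero
  push_cast at h2 h4
  simp only [Real.rpow_ofNat, ← pow_mul, ← Real.sqrt_eq_rpow] at holder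
  rwa [h2, h4, Real.sqrt_sq lpNorm_nonneg, show lpNorm g 4 μ ^ 4 = (lpNorm g 4 μ ^ 2) ^ 2 by ring,
    Real.sqrt_sq (by positivity)] at holder

theorem lpNorm_four_le_sqrt_mul_sqrt {g : α → E} {h : α → F} (hg : MemLp g 4 μ)
    (hh : MemLp h 2 μ) {K : ℝ} (hK : 0 ≤ K)
    (H : ∫ x, ‖g x‖ ^ 4 ∂μ ≤ K * ∫ x, ‖h x‖ * ‖g x‖ ^ 2 ∂μ) :
    lpNorm g 4 μ ≤ √K * √(lpNorm h 2 μ) := by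
  have h4 := integral_norm_pow_eq_lpNorm_pow hg.1 four_ne_zero
  push_cast at h4
  have hN : lpNorm g 4 μ ^ 4 ≤ K * lpNorm h 2 μ * lpNorm g 4 μ ^ 2 :=
    calc lpNorm g 4 μ ^ 4 ≤ K * ∫ x, ‖h x‖ * ‖g x‖ ^ 2 ∂μ := h4 ▸ H
      _ ≤ K * (lpNorm h 2 μ * lpNorm g 4 μ ^ 2) :=
        mul_le_mul_of_nonneg_left (integral_norm_mul_norm_sq_le hg hh) hK
      _ = _ := by ring
  rw [← Real.sqrt_mul hK]
  apply Real.le_sqrt_of_sq_le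
  rcases (sq_nonneg (lpNorm g 4 μ)).eq_or_lt with h0 | hpos
  · rw [← h0]; exact mul_nonneg hK lpNorm_nonneg
  · nlinarith

end Lp

theorem SchwartzMap.norm_le_iSup_norm {E F : Type*} [NormedAddCommGroup E] [NormedSpace ℝ E]
    [NormedAddCommGroup F] [NormedSpace ℝ F] (f : 𝓢(E, F)) (x : E) : ‖f x‖ ≤ ⨆ y, ‖f y‖ :=
  le_ciSup ⟨_, Set.forall_mem_range.2 (f.norm_le_seminorm ℝ)⟩ x

theorem mul_conj_sq_mul_conj (z : ℂ) : z * conj (z ^ 2 * conj z) = ((‖z‖ ^ 4 : ℝ) : ℂ) := by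
  simp only [map_mul, map_pow, Complex.conj_conj]
  rw [show z * (conj z ^ 2 * z) = (z * conj z) ^ 2 by ring, Complex.mul_conj']
  push_cast
  ring

theorem norm_two_mul_conj_mul_sub_sq_mul_conj_le (z w : ℂ) :
    ‖2 * z * conj z * w - z ^ 2 * conj w‖ ≤ 3 * (‖w‖ * ‖z‖ ^ 2) := by
  refine (norm_sub_le _ _).trans_eq ?_
  simp only [norm_mul, norm_pow, RCLike.norm_conj, Complex.norm_ofNat]
  ring

theorem hasDerivAt_sq_mul_conj {g : ℝ → ℂ} {g' : ℂ} {x : ℝ} (hg : HasDerivAt g g' x) :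
    HasDerivAt (fun y => g y ^ 2 * conj (g y))
      (2 * g x * g' * conj (g x) + g x ^ 2 * conj g') x := by
  refine ((hg.pow 2).mul hg.star).congr_deriv ?_
  simp only [Nat.cast_ofNat, Pi.pow_apply, Complex.star_def]
  ring

section VectorField

variable {c₂ c₁ t : ℝ}

theorem vecL_mul_conj_sub_mul_conj_vecL (f u : ℝ → ℂ) (x : ℝ) :
    vecL c₂ c₁ t f x * conj (u x) - f x * conj (vecL c₂ c₁ t u x) =
      -(2 * c₂ * t * Complex.I) * (deriv f x * conj (u x) + f x * conj (deriv u x)) := by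
  simp only [vecL, map_sub, map_mul, map_add, Complex.conj_ofReal, Complex.conj_I, map_ofNat]
  ring

theorem integral_vecL_mul_conj (hct : c₂ * t ≠ 0) {f u : ℝ → ℂ} (hf : Differentiable ℝ f)
    (hu : Differentiable ℝ u) (hfu : Integrable fun x => vecL c₂ c₁ t f x * conj (u x))
    (hfu' : Integrable fun x => f x * conj (vecL c₂ c₁ t u x))
    (hlim : Tendsto (fun x => f x * conj (u x)) (cocompact ℝ) (𝓝 0)) :
    ∫ x, vecL c₂ c₁ t f x * conj (u x) = ∫ x, f x * conj (vecL c₂ c₁ t u x) := by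
  have hc : -(2 * c₂ * t * Complex.I) ≠ 0 := by
    simpa [Complex.ext_iff] using hct
  have hderiv : ∀ x, HasDerivAt (fun x => f x * conj (u x))
      (deriv f x * conj (u x) + f x * conj (deriv u x)) x :=
    fun x => (hf x).hasDerivAt.mul (hu x).hasDerivAt.star
  have hint : Integrable fun x => deriv f x * conj (u x) + f x * conj (deriv u x) := by
    refine ((hfu.sub hfu').const_mul (-(2 * c₂ * t * Complex.I))⁻¹).congr (ae_of_all _ fun x => ?_)
    simp only [Pi.sub_apply, vecL_mul_conj_sub_mul_conj_vecL, inv_mul_cancel_left₀ hc]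
  have hzero := integral_of_hasDerivAt_of_tendsto hderiv hint
    (hlim.mono_left atBot_le_cocompact) (hlim.mono_left atTop_le_cocompact)
  rw [← sub_eq_zero, ← integral_sub hfu hfu']
  simp only [vecL_mul_conj_sub_mul_conj_vecL]
  rw [integral_const_mul, hzero, sub_zero, mul_zero]

theorem vecL_sq_mul_conj {g : ℝ → ℂ} (hg : Differentiable ℝ g) (x : ℝ) :
    vecL c₂ c₁ t (fun y => g y ^ 2 * conj (g y)) x =
      2 * g x * conj (g x) * vecL c₂ c₁ t g x - g x ^ 2 * conj (vecL c₂ c₁ t g x) := by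
  simp only [vecL, (hasDerivAt_sq_mul_conj (hg x).hasDerivAt).deriv, map_sub, map_mul, map_add,
    Complex.conj_ofReal, Complex.conj_I, map_ofNat]
  ring

theorem integral_norm_pow_four_le_of_vecL (hct : c₂ * t ≠ 0) {f g h : 𝓢(ℝ, ℂ)}
    (hg : vecL c₂ c₁ t f = g) (hh : vecL c₂ c₁ t g = h) :
    ∫ x, ‖g x‖ ^ 4 ≤ 3 * (⨆ x, ‖f x‖) * ∫ x, ‖h x‖ * ‖g x‖ ^ 2 := by
  set M := ⨆ x, ‖f x‖
  set u : ℝ → ℂ := fun y => g y ^ 2 * conj (g y)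
  have hu : Differentiable ℝ u := fun x =>
    (hasDerivAt_sq_mul_conj (g.differentiable x).hasDerivAt).differentiableAt
  have hLu : vecL c₂ c₁ t u = fun x => 2 * g x * conj (g x) * h x - g x ^ 2 * conj (h x) := by
    ext x
    rw [vecL_sq_mul_conj g.differentiable, hh]
  have hgu : (fun x => vecL c₂ c₁ t f x * conj (u x)) = fun x => ((‖g x‖ ^ 4 : ℝ) : ℂ) := by
    ext x
    rw [hg, mul_conj_sq_mul_conj]
  have hbound : ∀ x, ‖f x * conj (vecL c₂ c₁ t u x)‖ ≤ 3 * M * (‖h x‖ * ‖g x‖ ^ 2) := by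
    intro x
    rw [hLu, norm_mul, RCLike.norm_conj, mul_comm 3 M, mul_assoc]
    exact mul_le_mul (f.norm_le_iSup_norm x) (norm_two_mul_conj_mul_sub_sq_mul_conj_le _ _)
      (norm_nonneg _) ((norm_nonneg _).trans (f.norm_le_iSup_norm 0))
  have hint_hg : Integrable fun x => ‖h x‖ * ‖g x‖ ^ 2 :=
    h.integrable.norm.mul_bdd (c := SchwartzMap.seminorm ℂ 0 0 g ^ 2) (by fun_prop)
      (ae_of_all _ fun x => by
        simpa using pow_le_pow_left₀ (norm_nonneg _) (g.norm_le_seminorm ℂ x) 2)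
  have hint : Integrable fun x => f x * conj (vecL c₂ c₁ t u x) := by
    refine (hint_hg.const_mul (3 * M)).mono' ?_ (ae_of_all _ hbound)
    rw [hLu]
    fun_prop
  have hlim : Tendsto (fun x => f x * conj (u x)) (cocompact ℝ) (𝓝 0) := by
    simpa [u] using f.tendsto_cocompact.mul
      ((((Complex.continuous_conj.tendsto 0).comp g.tendsto_cocompact).pow 2).mul
        g.tendsto_cocompact)
  have hsymm := integral_vecL_mul_conj hct f.differentiable hu
    (hgu ▸ ((g.memLp 4).integrable_norm_pow four_ne_zero).ofReal) hint hlim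
  calc ∫ x, ‖g x‖ ^ 4 = ‖∫ x, f x * conj (vecL c₂ c₁ t u x)‖ := by
        rw [← hsymm, hgu, integral_complex_ofReal, Complex.norm_real,
          Real.norm_of_nonneg (integral_nonneg fun x => by positivity)]
    _ ≤ ∫ x, ‖f x * conj (vecL c₂ c₁ t u x)‖ := norm_integral_le_integral_norm _
    _ ≤ ∫ x, 3 * M * (‖h x‖ * ‖g x‖ ^ 2) :=
        integral_mono hint.norm (hint_hg.const_mul _) hbound
    _ = 3 * M * ∫ x, ‖h x‖ * ‖g x‖ ^ 2 := integral_const_mul _ _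

def vecLSchwartz (c₂ c₁ t : ℝ) : 𝓢(ℝ, ℂ) →L[ℂ] 𝓢(ℝ, ℂ) :=
  smulLeftCLM ℂ (fun x : ℝ => (x : ℂ) + c₁ * t) - (2 * Complex.I * c₂ * t) • derivCLM ℂ ℂ

theorem coe_vecLSchwartz (f : 𝓢(ℝ, ℂ)) : ⇑(vecLSchwartz c₂ c₁ t f) = vecL c₂ c₁ t f := by
  have hmul : (fun x : ℝ => (x : ℂ) + c₁ * t).HasTemperateGrowth := by fun_prop
  ext x
  simp [vecLSchwartz, vecL, smulLeftCLM_apply_apply hmul]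

end VectorField

/-- There is a constant `C > 0` depending only on `c₂` such that for every
`t ≥ 1` and every Schwartz function `f : ℝ → ℂ`,
`‖𝓛_t f‖_{L⁴} ≤ C ‖f‖_{L^∞}^{1/2} ‖𝓛_t² f‖_{L²}^{1/2}`, where `𝓛_t² f = 𝓛_t (𝓛_t f)`. -/
theorem L4_bound_by_L_squared (c₂ : ℝ) (hc₂ : 0 < c₂) :
    ∃ C : ℝ, 0 < C ∧ ∀ c₁ : ℝ, ∀ t : ℝ, 1 ≤ t → ∀ f : SchwartzMap ℝ ℂ,
      (eLpNorm (vecL c₂ c₁ t (⇑f)) 4 volume).toReal ≤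
        C * (⨆ x : ℝ, ‖f x‖) ^ ((1:ℝ)/2) *
          (eLpNorm (vecL c₂ c₁ t (vecL c₂ c₁ t (⇑f))) 2 volume).toReal ^ ((1:ℝ)/2) := by
  refine ⟨√3, by positivity, fun c₁ t ht f => ?_⟩
  set T := vecLSchwartz c₂ c₁ t
  have hct : c₂ * t ≠ 0 := by positivity
  have key := integral_norm_pow_four_le_of_vecL hct (coe_vecLSchwartz f).symm
    (coe_vecLSchwartz (T f)).symm
  rw [← coe_vecLSchwartz, ← coe_vecLSchwartz, toReal_eLpNorm (T f).continuous.aestronglyMeasurable,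
    toReal_eLpNorm (T (T f)).continuous.aestronglyMeasurable, ← Real.sqrt_eq_rpow,
    ← Real.sqrt_eq_rpow, ← Real.sqrt_mul zero_le_three]
  exact lpNorm_four_le_sqrt_mul_sqrt ((T f).memLp 4) ((T (T f)).memLp 2)
    (mul_nonneg zero_le_three (Real.iSup_nonneg fun x => norm_nonneg _)) key

end
end

section
/- Let α > 0 and λ = λ₁ + iλ₂ ∈ ℂ with λ₂ ≥ α|λ₁| / (2√(α+1)). Then for all complex numbers z ≠ 0 and w, one has −Im( λ ( ((α+2)/2) |z|^α w − (α/2) |z|^{α−2} z² \overline{w} ) \overline{w} ) ≤ ( (α/2)√(λ₁²+λ₂²) − ((α+2)/2) λ₂ ) |z|^α |w|² ≤ 0. -/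
/-!
Expanding the product, `w w̄ = |w|²` turns the first term into `((α+2)/2) λ₂ |z|^α |w|²`, while the
second, `(α/2) |z|^{α-2} Im(λ z² w̄²)`, is at most `(α/2) |λ| |z|^α |w|²` in absolute value. The
hypothesis on `λ`, squared, reads `α²λ₁² ≤ 4(α+1)λ₂²`, i.e. `α²|λ|² ≤ (α+2)²λ₂²`, which makes the
resulting coefficient nonpositive.
-/

open Real Complex ComplexConjugate

lemma mul_norm_le_add_two_mul_im {α : ℝ} (hα : 0 ≤ α) {lam : ℂ}
    (hlam : α * |lam.re| / (2 * √(α + 1)) ≤ lam.im) :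
    α * ‖lam‖ ≤ (α + 2) * lam.im := by
  have him : 0 ≤ lam.im := le_trans (by positivity) hlam
  have hre : α * |lam.re| ≤ 2 * √(α + 1) * lam.im := by
    rwa [div_le_iff₀' (by positivity)] at hlam
  have hsq : α ^ 2 * lam.re ^ 2 ≤ 4 * (α + 1) * lam.im ^ 2 := by
    have := pow_le_pow_left₀ (by positivity) hre 2
    rw [mul_pow, sq_abs, mul_pow, mul_pow, sq_sqrt (by linarith)] at this
    linarith
  refine (pow_le_pow_iff_left₀ (by positivity) (by positivity) two_ne_zero).1 ?_
  rw [mul_pow, ← normSq_eq_norm_sq, normSq_apply]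
  nlinarith

lemma im_mul_sq_mul_conj_sq_le (lam z w : ℂ) :
    (lam * z ^ 2 * conj w ^ 2).im ≤ ‖lam‖ * ‖z‖ ^ 2 * ‖w‖ ^ 2 := by
  have h := Complex.im_le_norm (lam * z ^ 2 * conj w ^ 2)
  rwa [norm_mul, norm_mul, norm_pow, norm_pow, norm_conj] at h

lemma im_mul_sub_mul_conj_mul_conj (lam z w : ℂ) (a p b q : ℝ) :
    (lam * (a * p * w - b * q * z ^ 2 * conj w) * conj w).im =
      a * p * lam.im * ‖w‖ ^ 2 - b * q * (lam * z ^ 2 * conj w ^ 2).im := by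
  have hw : w * conj w = ((‖w‖ ^ 2 : ℝ) : ℂ) := by rw [mul_conj, normSq_eq_norm_sq]
  have : lam * (a * p * w - b * q * z ^ 2 * conj w) * conj w =
      ((a * p * ‖w‖ ^ 2 : ℝ) : ℂ) * lam - ((b * q : ℝ) : ℂ) * (lam * z ^ 2 * conj w ^ 2) := by
    rw [ofReal_mul, ← hw]; push_cast; ring
  rw [this, sub_im, im_ofReal_mul, im_ofReal_mul]
  ring

lemma rpow_sub_two_mul_sq {r α : ℝ} (hr : 0 ≤ r) (hα : α ≠ 0) : r ^ (α - 2) * r ^ 2 = r ^ α := by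
  rw [← rpow_natCast, ← rpow_add' hr (by simpa using hα)]
  norm_num

theorem dissipative_pointwise_inequality_general (α : ℝ) (hα : 0 < α) (lam : ℂ)
    (hlam : α * |lam.re| / (2 * Real.sqrt (α + 1)) ≤ lam.im)
    (z w : ℂ) :
    -(lam * ((((α + 2) / 2 : ℝ) : ℂ) * ((‖z‖ ^ α : ℝ) : ℂ) * w -
          (((α / 2 : ℝ)) : ℂ) * ((‖z‖ ^ (α - 2) : ℝ) : ℂ) * z ^ 2 * (starRingEnd ℂ) w) *
        (starRingEnd ℂ) w).im ≤
      ((α / 2) * Real.sqrt (lam.re ^ 2 + lam.im ^ 2) - ((α + 2) / 2) * lam.im) *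
        ‖z‖ ^ α * ‖w‖ ^ 2 ∧
    ((α / 2) * Real.sqrt (lam.re ^ 2 + lam.im ^ 2) - ((α + 2) / 2) * lam.im) *
        ‖z‖ ^ α * ‖w‖ ^ 2 ≤ 0 := by
  rw [im_mul_sub_mul_conj_mul_conj, ← norm_eq_sqrt_sq_add_sq]
  have hcross : α / 2 * ‖z‖ ^ (α - 2) * (lam * z ^ 2 * conj w ^ 2).im ≤
      α / 2 * ‖lam‖ * ‖z‖ ^ α * ‖w‖ ^ 2 := by
    calc α / 2 * ‖z‖ ^ (α - 2) * (lam * z ^ 2 * conj w ^ 2).im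
        ≤ α / 2 * ‖z‖ ^ (α - 2) * (‖lam‖ * ‖z‖ ^ 2 * ‖w‖ ^ 2) := by
          gcongr
          exact im_mul_sq_mul_conj_sq_le lam z w
      _ = α / 2 * ‖lam‖ * (‖z‖ ^ (α - 2) * ‖z‖ ^ 2) * ‖w‖ ^ 2 := by ring
      _ = α / 2 * ‖lam‖ * ‖z‖ ^ α * ‖w‖ ^ 2 := by rw [rpow_sub_two_mul_sq (norm_nonneg z) hα.ne']
  have hcoeff : α / 2 * ‖lam‖ - (α + 2) / 2 * lam.im ≤ 0 := by
    linarith [mul_norm_le_add_two_mul_im hα.le hlam]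
  refine ⟨by linarith, ?_⟩
  exact mul_nonpos_of_nonpos_of_nonneg (mul_nonpos_of_nonpos_of_nonneg hcoeff (by positivity))
    (by positivity)

/-- For `α > 0` and `λ = λ₁ + iλ₂` with `λ₂ ≥ α|λ₁|/(2√(α+1))`, and all
complex `z ≠ 0` and `w`:
`−Im(λ(((α+2)/2)|z|^α w − (α/2)|z|^{α−2} z² w̄) w̄)
  ≤ ((α/2)√(λ₁²+λ₂²) − ((α+2)/2)λ₂)|z|^α |w|² ≤ 0`. -/
theorem dissipative_pointwise_inequality (α : ℝ) (hα : 0 < α) (lam : ℂ)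
    (hlam : α * |lam.re| / (2 * Real.sqrt (α + 1)) ≤ lam.im)
    (z w : ℂ) (hz : z ≠ 0) :
    -(lam * ((((α + 2) / 2 : ℝ) : ℂ) * ((‖z‖ ^ α : ℝ) : ℂ) * w -
          (((α / 2 : ℝ)) : ℂ) * ((‖z‖ ^ (α - 2) : ℝ) : ℂ) * z ^ 2 * (starRingEnd ℂ) w) *
        (starRingEnd ℂ) w).im ≤
      ((α / 2) * Real.sqrt (lam.re ^ 2 + lam.im ^ 2) - ((α + 2) / 2) * lam.im) *
        ‖z‖ ^ α * ‖w‖ ^ 2 ∧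
    ((α / 2) * Real.sqrt (lam.re ^ 2 + lam.im ^ 2) - ((α + 2) / 2) * lam.im) *
        ‖z‖ ^ α * ‖w‖ ^ 2 ≤ 0 :=
  dissipative_pointwise_inequality_general α hα lam hlam z w
end

section
/- Let c₂ > 0, c₁ ∈ ℝ, α > 0, t > 0, and let u : ℝ → ℂ be differentiable at a point x₀ with u(x₀) ≠ 0. Then the function |u|^α u is differentiable at x₀ and (𝓛_t(|u|^α u))(x₀) = ((α+2)/2) |u(x₀)|^α (𝓛_t u)(x₀) − (α/2) |u(x₀)|^{α−2} u(x₀)² \overline{(𝓛_t u)(x₀)}. -/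
/-!
Away from `0`, `F z = |z|^α z` is real differentiable with `DF(z) w = A w + B w̄`, where
`A = ((α+2)/2) |z|^α` and `B = (α/2) |z|^(α-2) z²`, and moreover `F z = A z - B z̄`.
Since the multiplication coefficient `x + c₁ t` of `𝓛_t` is real and its derivative coefficient
`-2 i c₂ t` is purely imaginary, any such pair `(A, B)` gives
`𝓛_t (F ∘ u) = A 𝓛_t u - B conj (𝓛_t u)`.
-/

open Real

noncomputable section

open scoped RealInnerProductSpace ComplexConjugate

theorem HasDerivAt.norm_rpow {F : Type*} [NormedAddCommGroup F] [InnerProductSpace ℝ F]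
    {f : ℝ → F} {f' : F} {x : ℝ} (α : ℝ) (hf : HasDerivAt f f' x) (hx : f x ≠ 0) :
    HasDerivAt (fun y => ‖f y‖ ^ α) (α * ‖f x‖ ^ (α - 2) * ⟪f x, f'⟫) x := by
  have h := hf.norm_sq.rpow_const (p := α / 2) (Or.inl (by positivity))
  simp only [← Real.rpow_natCast, ← Real.rpow_mul (norm_nonneg _)] at h
  convert h using 1
  · ext; ring_nf
  · ring_nf

theorem Complex.ofReal_two_mul_inner (z w : ℂ) :
    ((2 * ⟪z, w⟫ : ℝ) : ℂ) = conj z * w + z * conj w := by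
  rw [Complex.inner, Complex.ofReal_mul, Complex.re_eq_add_conj]
  simp only [map_mul, Complex.conj_conj]
  push_cast
  ring

theorem Complex.ofReal_norm_rpow {z : ℂ} (hz : z ≠ 0) (α : ℝ) :
    ((‖z‖ ^ α : ℝ) : ℂ) = ((‖z‖ ^ (α - 2) : ℝ) : ℂ) * (z * conj z) := by
  rw [Complex.mul_conj', ← Complex.ofReal_pow, ← Complex.ofReal_mul,
    Real.rpow_sub (norm_pos_iff.mpr hz), Real.rpow_two,
    div_mul_cancel₀ _ (pow_ne_zero 2 (norm_ne_zero_iff.mpr hz))]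

theorem HasDerivAt.norm_rpow_mul_self {u : ℝ → ℂ} {u' : ℂ} {x : ℝ} (α : ℝ)
    (hu : HasDerivAt u u' x) (hx : u x ≠ 0) :
    HasDerivAt (fun y => ((‖u y‖ ^ α : ℝ) : ℂ) * u y)
      ((((α + 2) / 2 : ℝ) : ℂ) * ((‖u x‖ ^ α : ℝ) : ℂ) * u' +
        ((α / 2 : ℝ) : ℂ) * ((‖u x‖ ^ (α - 2) : ℝ) : ℂ) * u x ^ 2 * conj u') x := by
  refine ((hu.norm_rpow α hx).ofReal_comp.mul hu).congr_deriv ?_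
  have hinner := Complex.ofReal_two_mul_inner (u x) u'
  rw [Complex.ofReal_norm_rpow hx α]
  push_cast at hinner ⊢
  linear_combination (α / 2 * ((‖u x‖ ^ (α - 2) : ℝ) : ℂ) * u x) * hinner

theorem vecL_eq_mul_sub_mul_conj (c₂ c₁ t : ℝ) {f g : ℝ → ℂ} {x : ℝ} {A B : ℂ}
    (hg : g x = A * f x - B * conj (f x))
    (hg' : deriv g x = A * deriv f x + B * conj (deriv f x)) :
    vecL c₂ c₁ t g x = A * vecL c₂ c₁ t f x - B * conj (vecL c₂ c₁ t f x) := by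
  simp only [vecL, hg, hg', map_sub, map_mul, map_add, Complex.conj_I, Complex.conj_ofReal,
    map_ofNat]
  ring

theorem vecL_of_power_nonlinearity_general (c₂ c₁ α t : ℝ)
    (u : ℝ → ℂ) (x₀ : ℝ) (hu : DifferentiableAt ℝ u x₀) (hne : u x₀ ≠ 0) :
    DifferentiableAt ℝ (fun x => ((‖u x‖ ^ α : ℝ) : ℂ) * u x) x₀ ∧
    vecL c₂ c₁ t (fun x => ((‖u x‖ ^ α : ℝ) : ℂ) * u x) x₀ =
      (((α + 2) / 2 : ℝ) : ℂ) * ((‖u x₀‖ ^ α : ℝ) : ℂ) * vecL c₂ c₁ t u x₀ -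
        ((α / 2 : ℝ) : ℂ) * ((‖u x₀‖ ^ (α - 2) : ℝ) : ℂ) * (u x₀) ^ 2 *
          (starRingEnd ℂ) (vecL c₂ c₁ t u x₀) := by
  have hF := hu.hasDerivAt.norm_rpow_mul_self α hne
  refine ⟨hF.differentiableAt, vecL_eq_mul_sub_mul_conj c₂ c₁ t ?_ hF.deriv⟩
  rw [Complex.ofReal_norm_rpow hne α]
  push_cast
  ring

/-- If `u` is differentiable at `x₀` with `u(x₀) ≠ 0`, then `|u|^α u`
is differentiable at `x₀` and
`𝓛_t(|u|^α u)(x₀) = ((α+2)/2)|u(x₀)|^α (𝓛_t u)(x₀) − (α/2)|u(x₀)|^{α−2} u(x₀)² conj((𝓛_t u)(x₀))`. -/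
theorem vecL_of_power_nonlinearity (c₂ c₁ α t : ℝ) (hc₂ : 0 < c₂) (hα : 0 < α) (ht : 0 < t)
    (u : ℝ → ℂ) (x₀ : ℝ) (hu : DifferentiableAt ℝ u x₀) (hne : u x₀ ≠ 0) :
    DifferentiableAt ℝ (fun x => ((‖u x‖ ^ α : ℝ) : ℂ) * u x) x₀ ∧
    vecL c₂ c₁ t (fun x => ((‖u x‖ ^ α : ℝ) : ℂ) * u x) x₀ =
      (((α + 2) / 2 : ℝ) : ℂ) * ((‖u x₀‖ ^ α : ℝ) : ℂ) * vecL c₂ c₁ t u x₀ -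
        ((α / 2 : ℝ) : ℂ) * ((‖u x₀‖ ^ (α - 2) : ℝ) : ℂ) * (u x₀) ^ 2 *
          (starRingEnd ℂ) (vecL c₂ c₁ t u x₀) :=
  vecL_of_power_nonlinearity_general c₂ c₁ α t u x₀ hu hne

end
end
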